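/- Let ρ1 and ρ2 be n×n density matrices and let d : ℝ^n → ℝ be a Schur-convex function. Then for every unital quantum channel Φ one has d(λ(ρ1 − Φ(ρ2))) ≤ d(λ(Λ↓(ρ1) − Λ↑(ρ2))), and there exists a mixed unitary channel (in particular a unital channel) Φ for which equality holds; thus the maximum of d(λ(ρ1 − Φ(ρ2))) over unital quantum channels Φ, and also over mixed unitary channels Φ, equals d(λ(Λ↓(ρ1) − Λ↑(ρ2))). -/

import Mathlib

/-!
Ky Fan's maximum principle: for Hermitian `X`, the sum of its `k` largest eigenvalues is the
maximum of `Re tr (C X)` over `0 ≤ C ≤ 1` with `tr C = k`, attained at a spectral projection `P`.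
For `X = ρ1 - Φ ρ2` this maximum is `tr (P ρ1) - tr (Φ†(P) ρ2)`. The first term is at most the sum
of the `k` largest eigenvalues of `ρ1`. As `Φ` is unital and trace preserving, `C = Φ†(P)` again
satisfies `0 ≤ C ≤ 1`, `tr C = k`, so Ky Fan applied to `1 - C` bounds the second term from below by
the sum of the `k` smallest eigenvalues of `ρ2`. The difference of these two bounds is a partial sum
of the diagonal of `Λ↓(ρ1) - Λ↑(ρ2)`, which by Schur is at most the corresponding partial sum of
its eigenvalues.

Equality holds for the unitary conjugation taking the increasingly ordered eigenbasis of `ρ2` to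
the decreasingly ordered eigenbasis of `ρ1`: then `ρ1 - Φ ρ2` is unitarily similar to
`Λ↓(ρ1) - Λ↑(ρ2)`.
-/

open Matrix
open scoped ComplexOrder Classical

/-- The vector of a tuple's entries sorted in decreasing (nonincreasing) order. -/
noncomputable def sortDec {n : ℕ} (x : Fin n → ℝ) : Fin n → ℝ :=
  fun i => x (Tuple.sort x i.rev)

/-- The eigenvalues of a Hermitian matrix arranged in decreasing order,
`λ(A)`; junk value `0` if `A` is not Hermitian. -/
noncomputable def eigsDec {n : ℕ} (A : Matrix (Fin n) (Fin n) ℂ) : Fin n → ℝ :=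
  if hA : A.IsHermitian then sortDec hA.eigenvalues else 0

/-- The eigenvalues of a Hermitian matrix arranged in increasing order. -/
noncomputable def eigsInc {n : ℕ} (A : Matrix (Fin n) (Fin n) ℂ) : Fin n → ℝ :=
  fun i => eigsDec A i.rev

/-- `Λ↓(A)`: the diagonal matrix of the eigenvalues of `A` in decreasing order. -/
noncomputable def LambdaDown {n : ℕ} (A : Matrix (Fin n) (Fin n) ℂ) :
    Matrix (Fin n) (Fin n) ℂ :=
  Matrix.diagonal fun i => (eigsDec A i : ℂ)

/-- `Λ↑(A)`: the diagonal matrix of the eigenvalues of `A` in increasing order. -/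
noncomputable def LambdaUp {n : ℕ} (A : Matrix (Fin n) (Fin n) ℂ) :
    Matrix (Fin n) (Fin n) ℂ :=
  Matrix.diagonal fun i => (eigsInc A i : ℂ)

/-- `x ≺ y`: the sum of the `k` largest entries of `x` is at most that of `y`
for every `k`, with equality of the total sums. -/
def Majorizes {n : ℕ} (x y : Fin n → ℝ) : Prop :=
  (∀ k : ℕ, ∑ i ∈ Finset.univ.filter (fun i : Fin n => (i : ℕ) < k), sortDec x i ≤
      ∑ i ∈ Finset.univ.filter (fun i : Fin n => (i : ℕ) < k), sortDec y i) ∧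
    (∑ i, x i) = ∑ i, y i

/-- A function `d` is Schur-convex if `x ≺ y` implies `d x ≤ d y`. -/
def SchurConvex {n : ℕ} (d : (Fin n → ℝ) → ℝ) : Prop :=
  ∀ x y : Fin n → ℝ, Majorizes x y → d x ≤ d y

/-- A density matrix: positive semidefinite with trace one. -/
def IsDensityMatrix {n : ℕ} (ρ : Matrix (Fin n) (Fin n) ℂ) : Prop :=
  ρ.PosSemidef ∧ ρ.trace = 1

/-- A quantum channel: completely positive trace preserving map in Kraus form. -/
def IsQuantumChannel {n : ℕ}
    (Φ : Matrix (Fin n) (Fin n) ℂ → Matrix (Fin n) (Fin n) ℂ) : Prop :=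
  ∃ (r : ℕ) (F : Fin r → Matrix (Fin n) (Fin n) ℂ),
    (∑ j, (F j)ᴴ * F j) = 1 ∧ ∀ X, Φ X = ∑ j, F j * X * (F j)ᴴ

/-- A unital quantum channel. -/
def IsUnitalChannel {n : ℕ}
    (Φ : Matrix (Fin n) (Fin n) ℂ → Matrix (Fin n) (Fin n) ℂ) : Prop :=
  IsQuantumChannel Φ ∧ Φ 1 = 1

/-- A mixed unitary channel: a convex combination of unitary conjugations. -/
def IsMixedUnitaryChannel {n : ℕ}
    (Φ : Matrix (Fin n) (Fin n) ℂ → Matrix (Fin n) (Fin n) ℂ) : Prop :=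
  ∃ (r : ℕ) (t : Fin r → ℝ) (U : Fin r → Matrix (Fin n) (Fin n) ℂ),
    (∀ j, 0 ≤ t j) ∧ (∑ j, t j) = 1 ∧
      (∀ j, U j ∈ Matrix.unitaryGroup (Fin n) ℂ) ∧
      ∀ X, Φ X = ∑ j, (t j : ℂ) • (U j * X * (U j)ᴴ)

/-- Functional calculus: `f(A)` for a Hermitian matrix `A`, via the spectral theorem;
junk value `0` if `A` is not Hermitian. -/
noncomputable def matFun {n : ℕ} (f : ℝ → ℝ) (A : Matrix (Fin n) (Fin n) ℂ) :
    Matrix (Fin n) (Fin n) ℂ :=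
  if hA : A.IsHermitian then
    (hA.eigenvectorUnitary : Matrix (Fin n) (Fin n) ℂ) *
      Matrix.diagonal (fun i => (f (hA.eigenvalues i) : ℂ)) *
      (hA.eigenvectorUnitary : Matrix (Fin n) (Fin n) ℂ)ᴴ
  else 0

/-- The square root of a positive semidefinite matrix, as `Matrix.PosSemidef.sqrt` was defined
in the older Mathlib (removed since). -/
noncomputable def psdSqrt {n : ℕ} {A : Matrix (Fin n) (Fin n) ℂ} (hA : A.PosSemidef) :
    Matrix (Fin n) (Fin n) ℂ :=
  (hA.1.eigenvectorUnitary : Matrix (Fin n) (Fin n) ℂ) *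
    Matrix.diagonal ((↑) ∘ Real.sqrt ∘ hA.1.eigenvalues) *
    (star hA.1.eigenvectorUnitary : Matrix (Fin n) (Fin n) ℂ)

/-- `|A| = (AᴴA)^{1/2}`. -/
noncomputable def matAbs {n : ℕ} (A : Matrix (Fin n) (Fin n) ℂ) :
    Matrix (Fin n) (Fin n) ℂ :=
  psdSqrt (Matrix.posSemidef_conjTranspose_mul_self A)

/-- `tr|A|`, the sum of the singular values of `A`. -/
noncomputable def traceAbs {n : ℕ} (A : Matrix (Fin n) (Fin n) ℂ) : ℝ :=
  ((matAbs A).trace).re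

/-- The singular values of `A` in decreasing order. -/
noncomputable def singVals {n : ℕ} (A : Matrix (Fin n) (Fin n) ℂ) : Fin n → ℝ :=
  eigsDec (matAbs A)

/-- The positive semidefinite square root of a PSD matrix (junk value `0` otherwise). -/
noncomputable def matSqrt {n : ℕ} (A : Matrix (Fin n) (Fin n) ℂ) :
    Matrix (Fin n) (Fin n) ℂ :=
  if hA : A.PosSemidef then psdSqrt hA else 0

/-- The fidelity `F(ρ,σ) = tr|ρ^{1/2} σ^{1/2}|`. -/
noncomputable def fidelity {n : ℕ} (ρ σ : Matrix (Fin n) (Fin n) ℂ) : ℝ :=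
  traceAbs (matSqrt ρ * matSqrt σ)

/-- The relative entropy `S(ρ‖σ) = tr(ρ (log ρ - log σ))`. -/
noncomputable def relEntropy {n : ℕ} (ρ σ : Matrix (Fin n) (Fin n) ℂ) : ℝ :=
  ((ρ * (matFun Real.log ρ - matFun Real.log σ)).trace).re

/-- The (real) trace of a matrix whose trace is real. -/
noncomputable def trR {n : ℕ} (A : Matrix (Fin n) (Fin n) ℂ) : ℝ := A.trace.re

section

variable {n : ℕ}

/-- On a decreasingly sorted vector, the sum of its `k` largest entries. -/
noncomputable def partialSum (k : ℕ) (x : Fin n → ℝ) : ℝ :=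
  ∑ i ∈ Finset.univ.filter (fun i : Fin n => (i : ℕ) < k), x i

lemma partialSum_eq_sum_ite (k : ℕ) (x : Fin n → ℝ) :
    partialSum k x = ∑ i : Fin n, if (i : ℕ) < k then x i else 0 :=
  Finset.sum_filter _ _

lemma partialSum_of_le {k : ℕ} (hk : n ≤ k) (x : Fin n → ℝ) : partialSum k x = ∑ i, x i := by
  rw [partialSum_eq_sum_ite]
  exact Finset.sum_congr rfl fun i _ => if_pos (i.isLt.trans_le hk)

lemma partialSum_sub (k : ℕ) (x y : Fin n → ℝ) :
    partialSum k (x - y) = partialSum k x - partialSum k y :=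
  Finset.sum_sub_distrib _ _

lemma sum_ite_val_lt_one {R : Type*} [AddCommMonoidWithOne R] {k : ℕ} (hk : k ≤ n) :
    ∑ i : Fin n, (if (i : ℕ) < k then (1 : R) else 0) = k := by
  rw [← Finset.sum_filter, Finset.sum_const, Fin.card_filter_val_lt, min_eq_right hk,
    nsmul_one]

lemma partialSum_rev (x : Fin n → ℝ) {k : ℕ} (hk : k ≤ n) :
    partialSum k (fun i => x i.rev) = ∑ i, x i - partialSum (n - k) x := by
  rw [partialSum_eq_sum_ite, partialSum_eq_sum_ite, ← Finset.sum_sub_distrib,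
    ← Equiv.sum_comp Fin.revPerm]
  refine Finset.sum_congr rfl fun i _ => ?_
  have := i.isLt
  simp only [Fin.revPerm_apply, Fin.rev_rev, Fin.val_rev]
  split_ifs <;> first | (exfalso; omega) | simp

lemma antitone_sortDec (x : Fin n → ℝ) : Antitone (sortDec x) :=
  fun _ _ hij => Tuple.monotone_sort x (Fin.rev_le_rev.mpr hij)

lemma sortDec_eq_comp (x : Fin n → ℝ) :
    sortDec x = x ∘ (Fin.revPerm.trans (Tuple.sort x)) := rfl

lemma sortDec_of_antitone {x : Fin n → ℝ} (hx : Antitone x) : sortDec x = x := by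
  have h := Tuple.comp_sort_eq_comp_iff_monotone.mpr
    (fun i j hij => hx (Fin.rev_le_rev.mpr hij) : Monotone (x ∘ Fin.revPerm))
  funext i
  simpa [sortDec, Fin.rev_rev] using congrFun h.symm i.rev

lemma sum_sortDec (x : Fin n → ℝ) : ∑ i, sortDec x i = ∑ i, x i :=
  Equiv.sum_comp (Fin.revPerm.trans (Tuple.sort x)) x

lemma majorizes_of_partialSum_le {x y : Fin n → ℝ} (hx : Antitone x) (hy : Antitone y)
    (h : ∀ k ≤ n, partialSum k x ≤ partialSum k y) (hsum : ∑ i, x i = ∑ i, y i) :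
    Majorizes x y := by
  refine ⟨fun k => ?_, hsum⟩
  rw [sortDec_of_antitone hx, sortDec_of_antitone hy]
  rcases le_or_gt k n with hk | hk
  · exact h k hk
  · rw [← partialSum, ← partialSum, partialSum_of_le hk.le, partialSum_of_le hk.le, hsum]

lemma sum_mul_le_partialSum_of_antitone {c y : Fin n → ℝ} (hy : Antitone y)
    (hc0 : ∀ i, 0 ≤ c i) (hc1 : ∀ i, c i ≤ 1) {k : ℕ} (hk : k ≤ n) (hck : ∑ i, c i = k) :
    ∑ i, c i * y i ≤ partialSum k y := by
  rcases hk.lt_or_eq with hk | rfl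
  · set t := y ⟨k, hk⟩
    -- compare termwise with the threshold `t = y k`, the first entry left out
    have hterm : ∀ i : Fin n, c i * y i - (if (i : ℕ) < k then y i else 0)
        ≤ (c i - if (i : ℕ) < k then 1 else 0) * t := by
      intro i
      by_cases hik : (i : ℕ) < k
      · have : t ≤ y i := hy (Fin.le_def.mpr hik.le)
        simp only [if_pos hik]
        nlinarith [hc1 i]
      · have : y i ≤ t := hy (Fin.le_def.mpr (not_lt.mp hik))
        simp only [if_neg hik]
        nlinarith [hc0 i]
    have hzero : ∑ i : Fin n, (c i - if (i : ℕ) < k then 1 else 0) * t = 0 := by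
      rw [← Finset.sum_mul, Finset.sum_sub_distrib, hck, sum_ite_val_lt_one hk.le, sub_self,
        zero_mul]
    have := Finset.sum_le_sum fun i (_ : i ∈ Finset.univ) => hterm i
    rw [Finset.sum_sub_distrib, hzero, ← partialSum_eq_sum_ite] at this
    linarith
  · have hc : ∀ i, c i = 1 := by
      have hz : ∑ i, (1 - c i) = 0 := by simp [Finset.sum_sub_distrib, hck]
      intro i
      linarith [(Finset.sum_eq_zero_iff_of_nonneg fun i _ => sub_nonneg.mpr (hc1 i)).mp hz i
        (Finset.mem_univ i)]
    simp [hc, partialSum_of_le le_rfl]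

lemma eigsDec_of_isHermitian {A : Matrix (Fin n) (Fin n) ℂ} (hA : A.IsHermitian) :
    eigsDec A = sortDec hA.eigenvalues :=
  dif_pos hA

lemma antitone_eigsDec (A : Matrix (Fin n) (Fin n) ℂ) : Antitone (eigsDec A) := by
  unfold eigsDec
  split_ifs
  exacts [antitone_sortDec _, antitone_const]

lemma sum_eigsDec {A : Matrix (Fin n) (Fin n) ℂ} (hA : A.IsHermitian) :
    ∑ i, eigsDec A i = A.trace.re := by
  rw [eigsDec_of_isHermitian hA, sum_sortDec, hA.trace_eq_sum_eigenvalues, Complex.re_sum]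
  simp

lemma sum_eigsInc {A : Matrix (Fin n) (Fin n) ℂ} (hA : A.IsHermitian) :
    ∑ i, eigsInc A i = A.trace.re := by
  rw [← sum_eigsDec hA]
  exact Equiv.sum_comp Fin.revPerm (eigsDec A)

lemma isHermitian_LambdaDown (A : Matrix (Fin n) (Fin n) ℂ) : (LambdaDown A).IsHermitian :=
  isHermitian_diagonal_of_self_adjoint _ (funext fun _ => Complex.conj_ofReal _)

lemma isHermitian_LambdaUp (A : Matrix (Fin n) (Fin n) ℂ) : (LambdaUp A).IsHermitian :=
  isHermitian_diagonal_of_self_adjoint _ (funext fun _ => Complex.conj_ofReal _)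

lemma eigsDec_unitary_conj {A U : Matrix (Fin n) (Fin n) ℂ} (hA : A.IsHermitian)
    (hU : U ∈ unitaryGroup (Fin n) ℂ) : eigsDec (U * A * Uᴴ) = eigsDec A := by
  have hUA : (U * A * Uᴴ).IsHermitian := isHermitian_mul_mul_conjTranspose U hA
  have hcharpoly : (U * A * Uᴴ).charpoly = A.charpoly := by
    rw [charpoly_mul_comm, ← Matrix.mul_assoc, ← star_eq_conjTranspose,
      Unitary.star_mul_self_of_mem hU, Matrix.one_mul]
  rw [eigsDec_of_isHermitian hUA, eigsDec_of_isHermitian hA,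
    (hUA.eigenvalues_eq_eigenvalues_iff hA).mpr hcharpoly]

lemma exists_unitary_eq_conj_diagonal_eigenvalues_comp {A : Matrix (Fin n) (Fin n) ℂ}
    (hA : A.IsHermitian) (σ : Equiv.Perm (Fin n)) :
    ∃ U ∈ unitaryGroup (Fin n) ℂ,
      A = U * diagonal (fun i => (hA.eigenvalues (σ i) : ℂ)) * Uᴴ := by
  set V : Matrix (Fin n) (Fin n) ℂ := (hA.eigenvectorUnitary : Matrix (Fin n) (Fin n) ℂ)
  have hV : V * Vᴴ = 1 := Unitary.mul_star_self_of_mem hA.eigenvectorUnitary.2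
  refine ⟨V.submatrix id σ, ?_, ?_⟩
  · rw [mem_unitaryGroup_iff, star_eq_conjTranspose, conjTranspose_submatrix,
      submatrix_mul_equiv, submatrix_id_id, hV]
  · have hdiag : diagonal (fun i => (hA.eigenvalues (σ i) : ℂ))
        = (diagonal (RCLike.ofReal ∘ hA.eigenvalues)).submatrix σ σ := by
      rw [submatrix_diagonal_equiv]
      rfl
    rw [hdiag, conjTranspose_submatrix, submatrix_mul_equiv, submatrix_mul_equiv,
      submatrix_id_id]
    simpa only [Unitary.conjStarAlgAut_apply, star_eq_conjTranspose] using hA.spectral_theorem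

lemma exists_unitary_eq_conj_LambdaDown {A : Matrix (Fin n) (Fin n) ℂ} (hA : A.IsHermitian) :
    ∃ U ∈ unitaryGroup (Fin n) ℂ, A = U * LambdaDown A * Uᴴ := by
  simpa only [LambdaDown, eigsDec_of_isHermitian hA, sortDec_eq_comp, Function.comp_apply] using
    exists_unitary_eq_conj_diagonal_eigenvalues_comp hA _

lemma exists_unitary_eq_conj_LambdaUp {A : Matrix (Fin n) (Fin n) ℂ} (hA : A.IsHermitian) :
    ∃ U ∈ unitaryGroup (Fin n) ℂ, A = U * LambdaUp A * Uᴴ := by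
  simpa only [LambdaUp, eigsInc, eigsDec_of_isHermitian hA, sortDec, Fin.rev_rev] using
    exists_unitary_eq_conj_diagonal_eigenvalues_comp hA (Tuple.sort hA.eigenvalues)

noncomputable def coordProj (k : ℕ) : Matrix (Fin n) (Fin n) ℂ :=
  diagonal fun i => if (i : ℕ) < k then 1 else 0

lemma posSemidef_coordProj (k : ℕ) : (coordProj k : Matrix (Fin n) (Fin n) ℂ).PosSemidef :=
  PosSemidef.diagonal fun i => by dsimp only; split_ifs <;> simp

lemma posSemidef_one_sub_coordProj (k : ℕ) :
    (1 - coordProj k : Matrix (Fin n) (Fin n) ℂ).PosSemidef := by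
  rw [coordProj, ← diagonal_one, diagonal_sub]
  exact PosSemidef.diagonal fun i => by dsimp only; split_ifs <;> simp

lemma trace_coordProj {k : ℕ} (hk : k ≤ n) :
    (coordProj k : Matrix (Fin n) (Fin n) ℂ).trace = k := by
  rw [coordProj, trace_diagonal, sum_ite_val_lt_one hk]

lemma re_trace_coordProj_mul (k : ℕ) (A : Matrix (Fin n) (Fin n) ℂ) :
    ((coordProj k * A).trace).re = partialSum k fun i => (A i i).re := by
  rw [partialSum_eq_sum_ite, coordProj, trace, Complex.re_sum]
  refine Finset.sum_congr rfl fun i _ => ?_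
  split_ifs with hik <;> simp [diagonal_mul, hik]

lemma trace_mul_conj_eq_trace_conj_mul (C X W : Matrix (Fin n) (Fin n) ℂ) :
    (C * (W * X * Wᴴ)).trace = (Wᴴ * C * W * X).trace := by
  rw [← Matrix.mul_assoc, ← Matrix.mul_assoc, trace_mul_comm]
  simp only [Matrix.mul_assoc]

lemma one_sub_conjTranspose_mul_mul_unitary {W : Matrix (Fin n) (Fin n) ℂ}
    (hW : W ∈ unitaryGroup (Fin n) ℂ) (C : Matrix (Fin n) (Fin n) ℂ) :
    1 - Wᴴ * C * W = Wᴴ * (1 - C) * W := by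
  rw [Matrix.mul_sub, Matrix.sub_mul, Matrix.mul_one, ← star_eq_conjTranspose,
    Unitary.star_mul_self_of_mem hW]

lemma trace_conjTranspose_mul_mul_unitary {W : Matrix (Fin n) (Fin n) ℂ}
    (hW : W ∈ unitaryGroup (Fin n) ℂ) (C : Matrix (Fin n) (Fin n) ℂ) :
    (Wᴴ * C * W).trace = C.trace := by
  rw [trace_mul_cycle, ← star_eq_conjTranspose, Unitary.mul_star_self_of_mem hW,
    Matrix.one_mul]

lemma re_diag_mem_Icc {M : Matrix (Fin n) (Fin n) ℂ} (hM : M.PosSemidef)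
    (hM1 : (1 - M).PosSemidef) (i : Fin n) : (M i i).re ∈ Set.Icc 0 1 := by
  have h0 := (Complex.nonneg_iff.mp (hM.diag_nonneg (i := i))).1
  have h1 := (Complex.nonneg_iff.mp (hM1.diag_nonneg (i := i))).1
  simp only [Matrix.sub_apply, one_apply_eq, Complex.sub_re, Complex.one_re] at h1
  exact ⟨h0, by linarith⟩

lemma re_trace_mul_diagonal_le_partialSum {M : Matrix (Fin n) (Fin n) ℂ} (hM : M.PosSemidef)
    (hM1 : (1 - M).PosSemidef) {k : ℕ} (hk : k ≤ n) (hMk : M.trace = k) {y : Fin n → ℝ}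
    (hy : Antitone y) :
    ((M * diagonal fun i => (y i : ℂ)).trace).re ≤ partialSum k y := by
  have hsum : ∑ i, (M i i).re = k := by
    rw [← Complex.re_sum, show ∑ i, M i i = M.trace from rfl, hMk, Complex.natCast_re]
  have htrace : ((M * diagonal fun i => (y i : ℂ)).trace).re = ∑ i, (M i i).re * y i := by
    simp [Matrix.trace, mul_diagonal, Complex.re_sum]
  rw [htrace]
  exact sum_mul_le_partialSum_of_antitone hy (fun i => (re_diag_mem_Icc hM hM1 i).1)
    (fun i => (re_diag_mem_Icc hM hM1 i).2) hk hsum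

lemma re_trace_mul_le_partialSum_eigsDec {A C : Matrix (Fin n) (Fin n) ℂ} (hA : A.IsHermitian)
    (hC : C.PosSemidef) (hC1 : (1 - C).PosSemidef) {k : ℕ} (hk : k ≤ n) (hCk : C.trace = k) :
    ((C * A).trace).re ≤ partialSum k (eigsDec A) := by
  obtain ⟨W, hW, hAW⟩ := exists_unitary_eq_conj_LambdaDown hA
  conv_lhs => rw [hAW, trace_mul_conj_eq_trace_conj_mul]
  refine re_trace_mul_diagonal_le_partialSum (hC.conjTranspose_mul_mul_same W) ?_ hk ?_
    (antitone_eigsDec A)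
  · rw [one_sub_conjTranspose_mul_mul_unitary hW]
    exact hC1.conjTranspose_mul_mul_same W
  · rw [trace_conjTranspose_mul_mul_unitary hW, hCk]

lemma exists_re_trace_mul_eq_partialSum_eigsDec {A : Matrix (Fin n) (Fin n) ℂ}
    (hA : A.IsHermitian) {k : ℕ} (hk : k ≤ n) :
    ∃ P : Matrix (Fin n) (Fin n) ℂ, P.PosSemidef ∧ (1 - P).PosSemidef ∧ P.trace = k ∧
      ((P * A).trace).re = partialSum k (eigsDec A) := by
  obtain ⟨W, hW, hAW⟩ := exists_unitary_eq_conj_LambdaDown hA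
  have hWW : W * Wᴴ = 1 := by rw [← star_eq_conjTranspose, Unitary.mul_star_self_of_mem hW]
  have hconj : Wᴴ * (W * coordProj k * Wᴴ) * W = coordProj k := by
    simp only [← Matrix.mul_assoc, ← star_eq_conjTranspose, Unitary.star_mul_self_of_mem hW,
      Matrix.one_mul]
    rw [Matrix.mul_assoc, star_eq_conjTranspose, ← star_eq_conjTranspose W,
      Unitary.star_mul_self_of_mem hW, Matrix.mul_one]
  refine ⟨W * coordProj k * Wᴴ, (posSemidef_coordProj k).mul_mul_conjTranspose_same W, ?_,
    ?_, ?_⟩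
  · rw [show 1 - W * coordProj k * Wᴴ = W * (1 - coordProj k) * Wᴴ by
      rw [Matrix.mul_sub, Matrix.sub_mul, Matrix.mul_one, hWW]]
    exact (posSemidef_one_sub_coordProj k).mul_mul_conjTranspose_same W
  · rw [← trace_conjTranspose_mul_mul_unitary hW, hconj, trace_coordProj hk]
  · conv_lhs => rw [hAW, trace_mul_conj_eq_trace_conj_mul, hconj, re_trace_coordProj_mul]
    simp [LambdaDown]

lemma partialSum_re_diag_le_partialSum_eigsDec {A : Matrix (Fin n) (Fin n) ℂ}
    (hA : A.IsHermitian) {k : ℕ} (hk : k ≤ n) :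
    (partialSum k fun i => (A i i).re) ≤ partialSum k (eigsDec A) := by
  rw [← re_trace_coordProj_mul]
  exact re_trace_mul_le_partialSum_eigsDec hA (posSemidef_coordProj k)
    (posSemidef_one_sub_coordProj k) hk (trace_coordProj hk)

lemma majorizes_eigsDec_of_re_trace_mul_le {A B : Matrix (Fin n) (Fin n) ℂ}
    (hA : A.IsHermitian) (hB : B.IsHermitian) (htrace : A.trace.re = B.trace.re)
    (h : ∀ k ≤ n, ∀ P : Matrix (Fin n) (Fin n) ℂ, P.PosSemidef → (1 - P).PosSemidef →
      P.trace = k → ((P * A).trace).re ≤ partialSum k (eigsDec B)) :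
    Majorizes (eigsDec A) (eigsDec B) := by
  refine majorizes_of_partialSum_le (antitone_eigsDec A) (antitone_eigsDec B) (fun k hk => ?_)
    (by rw [sum_eigsDec hA, sum_eigsDec hB, htrace])
  obtain ⟨P, hP, hP1, hPk, hPA⟩ := exists_re_trace_mul_eq_partialSum_eigsDec hA hk
  exact hPA ▸ h k hk P hP hP1 hPk

section Kraus

variable {r : ℕ} (F : Fin r → Matrix (Fin n) (Fin n) ℂ)

noncomputable def krausAdjoint (P : Matrix (Fin n) (Fin n) ℂ) : Matrix (Fin n) (Fin n) ℂ :=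
  ∑ j, (F j)ᴴ * P * F j

lemma trace_mul_kraus (P X : Matrix (Fin n) (Fin n) ℂ) :
    (P * ∑ j, F j * X * (F j)ᴴ).trace = (krausAdjoint F P * X).trace := by
  simp only [krausAdjoint, Matrix.mul_sum, Matrix.sum_mul, trace_sum]
  refine Finset.sum_congr rfl fun j _ => ?_
  rw [← Matrix.mul_assoc, trace_mul_comm]
  simp only [Matrix.mul_assoc]

lemma krausAdjoint_sub (P Q : Matrix (Fin n) (Fin n) ℂ) :
    krausAdjoint F (P - Q) = krausAdjoint F P - krausAdjoint F Q := by
  simp only [krausAdjoint, Matrix.mul_sub, Matrix.sub_mul, Finset.sum_sub_distrib]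

lemma krausAdjoint_one (hF : ∑ j, (F j)ᴴ * F j = 1) : krausAdjoint F 1 = 1 := by
  simp only [krausAdjoint, Matrix.mul_one, hF]

lemma posSemidef_krausAdjoint {P : Matrix (Fin n) (Fin n) ℂ} (hP : P.PosSemidef) :
    (krausAdjoint F P).PosSemidef :=
  posSemidef_sum _ fun j _ => hP.conjTranspose_mul_mul_same (F j)

lemma trace_krausAdjoint (hF : ∑ j, F j * (F j)ᴴ = 1) (P : Matrix (Fin n) (Fin n) ℂ) :
    (krausAdjoint F P).trace = P.trace :=
  calc (krausAdjoint F P).trace = ((∑ j, F j * (F j)ᴴ) * P).trace := by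
        simp only [krausAdjoint, trace_sum, Matrix.sum_mul]
        refine Finset.sum_congr rfl fun j _ => ?_
        rw [trace_mul_comm, ← Matrix.mul_assoc]
    _ = P.trace := by rw [hF, Matrix.one_mul]

lemma isHermitian_kraus {X : Matrix (Fin n) (Fin n) ℂ} (hX : X.IsHermitian) :
    (∑ j, F j * X * (F j)ᴴ).IsHermitian :=
  isSelfAdjoint_sum _ fun j _ => isHermitian_mul_mul_conjTranspose (F j) hX

lemma trace_kraus (hF : ∑ j, (F j)ᴴ * F j = 1) (X : Matrix (Fin n) (Fin n) ℂ) :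
    (∑ j, F j * X * (F j)ᴴ).trace = X.trace := by
  rw [← Matrix.one_mul (∑ j, _), trace_mul_kraus, krausAdjoint_one F hF, Matrix.one_mul]

end Kraus

lemma re_diag_LambdaDown_sub_LambdaUp (A B : Matrix (Fin n) (Fin n) ℂ) :
    (fun i => ((LambdaDown A - LambdaUp B) i i).re) = eigsDec A - eigsInc B := by
  ext i
  simp [LambdaDown, LambdaUp]

lemma re_trace_LambdaDown_sub_LambdaUp {A B : Matrix (Fin n) (Fin n) ℂ} (hA : A.IsHermitian)
    (hB : B.IsHermitian) : (LambdaDown A - LambdaUp B).trace.re = A.trace.re - B.trace.re := by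
  rw [← sum_eigsDec hA, ← sum_eigsInc hB, ← Finset.sum_sub_distrib, Matrix.trace,
    Complex.re_sum]
  exact Finset.sum_congr rfl fun i _ => congrFun (re_diag_LambdaDown_sub_LambdaUp A B) i

theorem majorizes_eigsDec_sub_unitalChannel {A B : Matrix (Fin n) (Fin n) ℂ}
    (hA : A.IsHermitian) (hB : B.IsHermitian)
    {Φ : Matrix (Fin n) (Fin n) ℂ → Matrix (Fin n) (Fin n) ℂ} (hΦ : IsUnitalChannel Φ) :
    Majorizes (eigsDec (A - Φ B)) (eigsDec (LambdaDown A - LambdaUp B)) := by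
  obtain ⟨⟨r, F, hF, hΦF⟩, hΦ1⟩ := hΦ
  have hFF : ∑ j, F j * (F j)ᴴ = 1 := by simpa using (hΦF 1).symm.trans hΦ1
  rw [hΦF]
  refine majorizes_eigsDec_of_re_trace_mul_le (hA.sub (isHermitian_kraus F hB))
    ((isHermitian_LambdaDown A).sub (isHermitian_LambdaUp B)) ?_ fun k hk P hP hP1 hPk => ?_
  · rw [re_trace_LambdaDown_sub_LambdaUp hA hB, trace_sub, trace_kraus F hF, Complex.sub_re]
  set C := krausAdjoint F P
  have hC : C.PosSemidef := posSemidef_krausAdjoint F hP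
  have hC1 : (1 - C).PosSemidef := by
    rw [← krausAdjoint_one F hF, ← krausAdjoint_sub]
    exact posSemidef_krausAdjoint F hP1
  have hA_le : ((P * A).trace).re ≤ partialSum k (eigsDec A) :=
    re_trace_mul_le_partialSum_eigsDec hA hP hP1 hk hPk
  have hB_le : (((1 - C) * B).trace).re ≤ partialSum (n - k) (eigsDec B) := by
    refine re_trace_mul_le_partialSum_eigsDec hB hC1 (by rwa [sub_sub_cancel])
      (Nat.sub_le n k) ?_
    rw [trace_sub, trace_one, trace_krausAdjoint F hFF, hPk, Fintype.card_fin, Nat.cast_sub hk]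
  have hrev : partialSum k (eigsInc B) = B.trace.re - partialSum (n - k) (eigsDec B) := by
    rw [← sum_eigsDec hB]
    exact partialSum_rev (eigsDec B) hk
  have hSchur := partialSum_re_diag_le_partialSum_eigsDec
    ((isHermitian_LambdaDown A).sub (isHermitian_LambdaUp B)) hk
  rw [re_diag_LambdaDown_sub_LambdaUp, partialSum_sub] at hSchur
  rw [Matrix.mul_sub, trace_sub, Complex.sub_re, trace_mul_kraus]
  rw [Matrix.sub_mul, Matrix.one_mul, trace_sub, Complex.sub_re] at hB_le
  linarith

lemma isMixedUnitaryChannel_unitary_conj {V : Matrix (Fin n) (Fin n) ℂ}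
    (hV : V ∈ unitaryGroup (Fin n) ℂ) : IsMixedUnitaryChannel fun X => V * X * Vᴴ :=
  ⟨1, fun _ => 1, fun _ => V, fun _ => zero_le_one, by simp, fun _ => hV, fun X => by simp⟩

lemma isUnitalChannel_unitary_conj {V : Matrix (Fin n) (Fin n) ℂ}
    (hV : V ∈ unitaryGroup (Fin n) ℂ) : IsUnitalChannel fun X => V * X * Vᴴ := by
  refine ⟨⟨1, fun _ => V, ?_, fun X => by simp⟩, ?_⟩
  · simpa [← star_eq_conjTranspose] using Unitary.star_mul_self_of_mem hV
  · simpa [← star_eq_conjTranspose] using Unitary.mul_star_self_of_mem hV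

lemma exists_unitary_sub_conj_eq_conj {A B : Matrix (Fin n) (Fin n) ℂ} (hA : A.IsHermitian)
    (hB : B.IsHermitian) :
    ∃ V ∈ unitaryGroup (Fin n) ℂ, ∃ U ∈ unitaryGroup (Fin n) ℂ,
      A - V * B * Vᴴ = U * (LambdaDown A - LambdaUp B) * Uᴴ := by
  obtain ⟨U, hU, hAU⟩ := exists_unitary_eq_conj_LambdaDown hA
  obtain ⟨W, hW, hBW⟩ := exists_unitary_eq_conj_LambdaUp hB
  have hW' : Wᴴ ∈ unitaryGroup (Fin n) ℂ := by
    simpa only [star_eq_conjTranspose] using Unitary.star_mem hW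
  refine ⟨U * Wᴴ, mul_mem hU hW', U, hU, ?_⟩
  have hWW : Wᴴ * W = 1 := by rw [← star_eq_conjTranspose, Unitary.star_mul_self_of_mem hW]
  conv_lhs => rw [hAU, hBW]
  simp only [conjTranspose_mul, conjTranspose_conjTranspose, Matrix.mul_sub, Matrix.sub_mul,
    Matrix.mul_assoc]
  rw [← Matrix.mul_assoc Wᴴ W, hWW, Matrix.one_mul, ← Matrix.mul_assoc Wᴴ W, hWW,
    Matrix.one_mul]

end

/-- For density matrices `ρ1, ρ2` and a Schur-convex `d`, the maximum of
`d(λ(ρ1 - Φ(ρ2)))` over unital channels `Φ` (equivalently over mixed unitary channels) equals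
`d(λ(Λ↓(ρ1) - Λ↑(ρ2)))`, and is attained by a mixed unitary (in particular unital) channel. -/
theorem stmt_3 {n : ℕ} (ρ1 ρ2 : Matrix (Fin n) (Fin n) ℂ)
    (h1 : IsDensityMatrix ρ1) (h2 : IsDensityMatrix ρ2)
    (d : (Fin n → ℝ) → ℝ) (hd : SchurConvex d) :
    (∀ Φ, IsUnitalChannel Φ →
        d (eigsDec (ρ1 - Φ ρ2)) ≤ d (eigsDec (LambdaDown ρ1 - LambdaUp ρ2))) ∧
      ∃ Φ, IsMixedUnitaryChannel Φ ∧ IsUnitalChannel Φ ∧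
        d (eigsDec (ρ1 - Φ ρ2)) = d (eigsDec (LambdaDown ρ1 - LambdaUp ρ2)) := by
  have h1h : ρ1.IsHermitian := h1.1.1
  have h2h : ρ2.IsHermitian := h2.1.1
  refine ⟨fun Φ hΦ => hd _ _ (majorizes_eigsDec_sub_unitalChannel h1h h2h hΦ), ?_⟩
  obtain ⟨V, hV, U, hU, hVU⟩ := exists_unitary_sub_conj_eq_conj h1h h2h
  refine ⟨fun X => V * X * Vᴴ, isMixedUnitaryChannel_unitary_conj hV,
    isUnitalChannel_unitary_conj hV, ?_⟩
  rw [hVU, eigsDec_unitary_conj ((isHermitian_LambdaDown ρ1).sub (isHermitian_LambdaUp ρ2)) hU]
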